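/- arXiv:2110.00450 — 8 statements merged into one kernel-verified Lean document; each statement's English description precedes it below -/
import Mathlib

section
/- For nonzero rationals T, Q and t = T²/Q - 2, conjugation by A = [[Q, -Q],[0, T]] defines a ring isomorphism Φ from R(T,Q) to R(t,1), and Φ(D_{T,Q}²) = Q·D_{t,1}. -/
theorem stmt_3 (T Q : ℚ) (hT : T ≠ 0) (hQ : Q ≠ 0)
    (t : ℚ) (ht : t = T ^ 2 / Q - 2)
    (D : Matrix (Fin 2) (Fin 2) ℚ) (hD : D = !![0, -Q; 1, T])
    (Dt : Matrix (Fin 2) (Fin 2) ℚ) (hDt : Dt = !![0, -1; 1, t])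
    (A : Matrix (Fin 2) (Fin 2) ℚ) (hA : A = !![Q, -Q; 0, T]) :
    ∃ Φ : Subring.centralizer {D} ≃+* Subring.centralizer {Dt},
      (∀ X : Subring.centralizer {D}, (Φ X : Matrix (Fin 2) (Fin 2) ℚ) = A⁻¹ * X * A) ∧
        A⁻¹ * D ^ 2 * A = Q • Dt := by
  have hdet : IsUnit A.det := by
    rw [hA]
    simp [Matrix.det_fin_two_of, isUnit_iff_ne_zero, mul_ne_zero hQ hT]
  have h1 : A⁻¹ * A = 1 := Matrix.nonsing_inv_mul A hdet
  have h2 : A * A⁻¹ = 1 := Matrix.mul_nonsing_inv A hdet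
  have e1 : ∀ y z : Matrix (Fin 2) (Fin 2) ℚ,
      (A⁻¹ * y * A) * (A⁻¹ * z * A) = A⁻¹ * (y * z) * A := by
    intro y z
    simp only [mul_assoc]
    rw [show A * (A⁻¹ * (z * A)) = z * A by rw [← mul_assoc, h2, one_mul]]
  have e2 : ∀ y z : Matrix (Fin 2) (Fin 2) ℚ,
      (A * y * A⁻¹) * (A * z * A⁻¹) = A * (y * z) * A⁻¹ := by
    intro y z
    simp only [mul_assoc]
    rw [show A⁻¹ * (A * (z * A⁻¹)) = z * A⁻¹ by rw [← mul_assoc, h1, one_mul]]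
  have key : A * Dt = ((T / Q) • D - 1) * A := by
    subst hA hD hDt ht
    ext i j
    fin_cases i <;> fin_cases j <;>
      · simp [Matrix.mul_apply, Fin.sum_univ_two, Matrix.one_apply]
        try field_simp
        try ring
  have keyDt : Dt = A⁻¹ * ((T / Q) • D - 1) * A := by
    rw [mul_assoc, ← key, ← mul_assoc, h1, one_mul]
  have keyE : A * Dt * A⁻¹ = (T / Q) • D - 1 := by
    rw [key, mul_assoc, h2, mul_one]
  have keyD : D = (Q / T) • (A * (Dt + 1) * A⁻¹) := by
    have h3 : A * (Dt + 1) * A⁻¹ = (T / Q) • D := by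
      rw [mul_add, mul_one, add_mul, keyE, h2, sub_add_cancel]
    rw [h3, smul_smul, div_mul_div_comm, mul_comm Q T, div_self (mul_ne_zero hT hQ), one_smul]
  have memfwd : ∀ X : Matrix (Fin 2) (Fin 2) ℚ,
      D * X = X * D → (A⁻¹ * X * A) ∈ Subring.centralizer {Dt} := by
    intro X hX
    rw [Subring.mem_centralizer_iff]
    rintro g rfl
    have hEX : ((T / Q) • D - 1) * X = X * ((T / Q) • D - 1) := by
      rw [sub_mul, mul_sub, one_mul, mul_one, smul_mul_assoc, mul_smul_comm, hX]
    rw [keyDt, e1, e1, hEX]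
  have memrev : ∀ Y : Matrix (Fin 2) (Fin 2) ℚ,
      Dt * Y = Y * Dt → (A * Y * A⁻¹) ∈ Subring.centralizer {D} := by
    intro Y hY
    rw [Subring.mem_centralizer_iff]
    rintro g rfl
    have hFY : (Dt + 1) * Y = Y * (Dt + 1) := by
      rw [add_mul, mul_add, one_mul, mul_one, hY]
    rw [keyD, smul_mul_assoc, mul_smul_comm, e2, e2, hFY]
  have memD : ∀ X : Subring.centralizer {D},
      D * (X : Matrix (Fin 2) (Fin 2) ℚ) = (X : Matrix (Fin 2) (Fin 2) ℚ) * D :=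
    fun X => Subring.mem_centralizer_iff.mp X.2 D rfl
  have memDt : ∀ Y : Subring.centralizer {Dt},
      Dt * (Y : Matrix (Fin 2) (Fin 2) ℚ) = (Y : Matrix (Fin 2) (Fin 2) ℚ) * Dt :=
    fun Y => Subring.mem_centralizer_iff.mp Y.2 Dt rfl
  refine ⟨{ toFun := fun X => ⟨A⁻¹ * X * A, memfwd X (memD X)⟩,
            invFun := fun Y => ⟨A * Y * A⁻¹, memrev Y (memDt Y)⟩,
            left_inv := ?_, right_inv := ?_, map_mul' := ?_, map_add' := ?_ },
          fun X => rfl, ?_⟩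
  · intro X
    ext : 1
    show A * (A⁻¹ * (X : Matrix (Fin 2) (Fin 2) ℚ) * A) * A⁻¹ = X
    rw [← mul_assoc, ← mul_assoc, h2, one_mul, mul_assoc, h2, mul_one]
  · intro Y
    ext : 1
    show A⁻¹ * (A * (Y : Matrix (Fin 2) (Fin 2) ℚ) * A⁻¹) * A = Y
    rw [← mul_assoc, ← mul_assoc, h1, one_mul, mul_assoc, h1, mul_one]
  · intro X Y
    ext : 1
    exact (e1 X Y).symm
  · intro X Y
    ext : 1
    show A⁻¹ * ((X : Matrix (Fin 2) (Fin 2) ℚ) + Y) * A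
        = A⁻¹ * X * A + A⁻¹ * Y * A
    rw [mul_add, add_mul]
  · have hsq : D ^ 2 * A = A * (Q • Dt) := by
      subst hA hD hDt ht
      ext i j
      fin_cases i <;> fin_cases j <;>
        · simp [pow_two, Matrix.mul_apply, Fin.sum_univ_two]
          try field_simp
          try ring
    rw [mul_assoc, hsq, ← mul_assoc, h1, one_mul]
end

section
/- If {xₙ} is a sequence of rationals satisfying x_{n+1} = T·xₙ - Q·x_{n-1} for all integers n, and t = T²/Q - 2, then the sequence y_k = Q^{1-k}·x_{2k} satisfies y_{k+1} = t·y_k - y_{k-1} for all integers k. -/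
theorem stmt_4 (T Q : ℚ) (hT : T ≠ 0) (hQ : Q ≠ 0)
    (t : ℚ) (ht : t = T ^ 2 / Q - 2)
    (x : ℤ → ℚ) (hx : ∀ n : ℤ, x (n + 1) = T * x n - Q * x (n - 1))
    (y : ℤ → ℚ) (hy : ∀ k : ℤ, y k = Q ^ (1 - k) * x (2 * k)) :
    ∀ k : ℤ, y (k + 1) = t * y k - y (k - 1) := by
  intro k
  have e1 := hx (2 * k + 1)
  have e2 := hx (2 * k)
  have e3 := hx (2 * k - 1)
  have i1 : (2 * k + 1 + 1 : ℤ) = 2 * (k + 1) := by ring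
  have i2 : (2 * k + 1 - 1 : ℤ) = 2 * k := by ring
  have i3 : (2 * k - 1 + 1 : ℤ) = 2 * k := by ring
  have i4 : (2 * k - 1 - 1 : ℤ) = 2 * (k - 1) := by ring
  rw [i1, i2] at e1
  rw [i3, i4] at e3
  have key : x (2 * (k + 1)) = (T ^ 2 - 2 * Q) * x (2 * k) - Q ^ 2 * x (2 * (k - 1)) := by
    have hT' : T * x (2 * k - 1) = x (2 * k) + Q * x (2 * (k - 1)) := by
      rw [e3]; ring
    rw [e1, e2]
    have : T * (T * x (2 * k) - Q * x (2 * k - 1)) - Q * x (2 * k)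
        = T ^ 2 * x (2 * k) - Q * (T * x (2 * k - 1)) - Q * x (2 * k) := by ring
    rw [this, hT']
    ring
  rw [hy (k + 1), hy k, hy (k - 1), key, ht]
  have h1 : Q ^ (1 - (k + 1)) = Q ^ (-k) := by
    congr 1; ring
  have h2 : Q ^ (1 - k) = Q * Q ^ (-k) := by
    have : (1 - k : ℤ) = 1 + -k := by ring
    rw [this, zpow_add₀ hQ, zpow_one]
  have h3 : Q ^ (1 - (k - 1)) = Q * Q * Q ^ (-k) := by
    have : (1 - (k - 1) : ℤ) = 2 + -k := by ring
    rw [this, zpow_add₀ hQ, zpow_two]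
  rw [h1, h2, h3]
  field_simp
end

section
/- Given rational t with t ≠ ±2, for a rational a there exists a matrix X in R(t,1) with trace a and determinant 1 if and only if (a² - 4)/(t² - 4) is a square of a rational number. -/
theorem stmt_9 (t : ℚ) (ht : t ^ 2 ≠ 4) (a : ℚ)
    (Dt : Matrix (Fin 2) (Fin 2) ℚ) (hDt : Dt = !![0, -1; 1, t]) :
    (∃ X : Matrix (Fin 2) (Fin 2) ℚ, X * Dt = Dt * X ∧
        Matrix.trace X = a ∧ X.det = 1) ↔
      ∃ r : ℚ, (a ^ 2 - 4) / (t ^ 2 - 4) = r ^ 2 := by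
  have ht4 : t ^ 2 - 4 ≠ 0 := sub_ne_zero.mpr ht
  subst hDt
  constructor
  · rintro ⟨X, hcomm, htr, hdet⟩
    have h00 := congrFun (congrFun hcomm 0) 0
    have h01 := congrFun (congrFun hcomm 0) 1
    simp [Matrix.mul_apply, Fin.sum_univ_two] at h00 h01
    rw [Matrix.trace_fin_two] at htr
    rw [Matrix.det_fin_two] at hdet
    have h11 : X 1 1 = X 0 0 + t * X 1 0 := by rw [h00] at h01; linarith
    refine ⟨X 1 0, ?_⟩
    field_simp
    linear_combination (-(a + X 0 0 + X 1 1)) * htr +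
      (X 1 1 - X 0 0 + t * X 1 0) * h11 + 4 * hdet + 4 * X 1 0 * h00
  · rintro ⟨r, hr⟩
    have key : a ^ 2 - 4 = (t ^ 2 - 4) * r ^ 2 := by
      field_simp at hr; linarith [hr]
    refine ⟨!![(a - t * r)/2, -r; r, (a + t * r)/2], ?_, ?_, ?_⟩
    · ext i j
      fin_cases i <;> fin_cases j <;>
        simp [Matrix.mul_apply, Fin.sum_univ_two] <;> ring
    · rw [Matrix.trace_fin_two]; simp; ring
    · rw [Matrix.det_fin_two]; simp; nlinarith [key]
end

section
/- Let p be an odd prime and t ∈ F_p with t² ≠ 4. Let L_p(t) be the group of invertible 2×2 matrices over F_p commuting with D_t = [[0,-1],[1,t]], modulo scalar matrices. Then L_p(t) is cyclic; its order is p - 1 if t² - 4 is a nonzero square in F_p, and p + 1 if t² - 4 is a non-square. -/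
/-!
Every matrix commuting with `D_t` has the form `a + b D_t`, so the centralizer is the unit group
of `F_p[X]/(X² - tX + 1)`: its elements correspond to the pairs `(a, b)` with
`det (a + b D_t) = a² + tab + b² ≠ 0`, and the scalars to those with `b = 0`. For a root `θ` of
`X² - tX + 1` in a field `K`, `χ_θ : a + b D_t ↦ a + bθ` is a character of the centralizer.

If `t² - 4` is a nonzero square, there are two distinct roots `α, β ∈ F_p`, and `χ_α / χ_β` maps
onto `F_p^*` with kernel the scalars. Otherwise `X² - tX + 1` is irreducible, and `χ_θ` into
`K = F_p[θ]` followed by `K^* → K^*/F_p^*` has kernel the scalars, so the quotient embeds in a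
cyclic group; since `a² + tab + b²` vanishes only at `(0, 0)`, its order is
`(p² - 1)/(p - 1) = p + 1`.
-/

open Matrix

/-- The 2×2 matrices over `ZMod p`. -/
abbrev M2 (p : ℕ) := Matrix (Fin 2) (Fin 2) (ZMod p)

/-- The subgroup of scalar units (nonzero scalar matrices) in `(M2 p)ˣ`. -/
noncomputable def scalarUnits (p : ℕ) : Subgroup (M2 p)ˣ :=
  (Units.map (algebraMap (ZMod p) (M2 p)).toMonoidHom).range

theorem scalarUnits_normal (p : ℕ) : (scalarUnits p).Normal := by
  constructor
  rintro n ⟨c, rfl⟩ g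
  refine ⟨c, ?_⟩
  apply Units.ext
  have h : (g : M2 p) * (algebraMap (ZMod p) (M2 p) c) * ((g⁻¹ : (M2 p)ˣ) : M2 p)
      = algebraMap (ZMod p) (M2 p) c := by
    rw [← Algebra.commutes (c : ZMod p) (g : M2 p), mul_assoc, Units.mul_inv, mul_one]
  simpa using h.symm

instance scalarUnits_subgroupOf_normal (p : ℕ) (G : Subgroup (M2 p)ˣ) :
    ((scalarUnits p).subgroupOf G).Normal :=
  (scalarUnits_normal p).subgroupOf G

section AffD

variable {R : Type*} [CommRing R] (t : R)

def dMat : Matrix (Fin 2) (Fin 2) R := !![0, -1; 1, t]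

/-- The matrix `a + b D_t`. -/
def affD (a b : R) : Matrix (Fin 2) (Fin 2) R := !![a, -b; b, a + t * b]

@[simp] lemma affD_apply_zero_zero (a b : R) : affD t a b 0 0 = a := rfl

@[simp] lemma affD_apply_one_zero (a b : R) : affD t a b 1 0 = b := rfl

lemma commute_dMat_iff (M : Matrix (Fin 2) (Fin 2) R) :
    Commute (dMat t) M ↔ M = affD t (M 0 0) (M 1 0) := by
  rw [Commute, SemiconjBy, eta_fin_two M]
  simp only [dMat, affD, mul_fin_two, EmbeddingLike.apply_eq_iff_eq, vecCons_inj, and_true,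
    of_apply, cons_val', cons_val_zero, cons_val_one, cons_val_fin_one]
  constructor
  · rintro ⟨⟨h00, -⟩, h10, -⟩
    exact ⟨⟨trivial, by linear_combination -h00⟩, trivial, by linear_combination -h10⟩
  · rintro ⟨⟨-, h01⟩, -, h11⟩
    refine ⟨⟨?_, ?_⟩, ?_, ?_⟩
    · linear_combination -h01
    · linear_combination -h11 - t * h01
    · linear_combination -h11
    · linear_combination h01

lemma affD_mul (a b c d : R) :
    affD t a b * affD t c d = affD t (a * c - b * d) (a * d + b * c + t * (b * d)) := by
  ext i j
  fin_cases i <;> fin_cases j <;> simp [affD, mul_apply] <;> ring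

lemma det_affD (a b : R) : (affD t a b).det = a ^ 2 + t * a * b + b ^ 2 := by
  rw [affD, det_fin_two_of]
  ring

lemma algebraMap_eq_affD (c : R) : algebraMap R (Matrix (Fin 2) (Fin 2) R) c = affD t c 0 := by
  rw [Algebra.algebraMap_eq_smul_one, smul_one_eq_diagonal, diagonal_fin_two, affD]
  simp

lemma algebraMap_det_affD {S : Type*} [CommRing S] [Algebra R S] {θ : S}
    (hθ : θ ^ 2 = algebraMap R S t * θ - 1) (a b : R) :
    algebraMap R S (affD t a b).det = (algebraMap R S a + algebraMap R S b * θ) *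
      (algebraMap R S a + algebraMap R S b * (algebraMap R S t - θ)) := by
  simp only [det_affD, map_add, map_mul, map_pow]
  linear_combination (algebraMap R S b) ^ 2 * hθ

end AffD

lemma sq_sub_mul_add_one_ne_zero {R : Type*} [CommRing R] {t : R}
    (h : ¬ ∃ r : R, t ^ 2 - 4 = r ^ 2) (z : R) : z ^ 2 - t * z + 1 ≠ 0 :=
  fun hz => h ⟨2 * z - t, by linear_combination -4 * hz⟩

lemma det_affD_ne_zero_iff {F : Type*} [Field F] {t : F}
    (hroot : ∀ z : F, z ^ 2 - t * z + 1 ≠ 0) (a b : F) : (affD t a b).det ≠ 0 ↔ (a, b) ≠ 0 := by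
  rw [det_affD]
  refine ⟨fun h hab => h ?_, fun hab h => ?_⟩
  · simp only [Prod.mk_eq_zero] at hab
    simp [hab]
  · by_cases hb : b = 0
    · simp_all
    · refine hroot (-a / b) ?_
      field_simp
      linear_combination h

lemma exists_roots_of_discr_eq_sq {F : Type*} [Field F] {t r : F} (h2 : (2 : F) ≠ 0)
    (hr0 : r ≠ 0) (hr : t ^ 2 - 4 = r ^ 2) : ∃ α β : F, α ≠ β ∧ α + β = t ∧ α * β = 1 := by
  refine ⟨(t + r) / 2, (t - r) / 2, fun h => hr0 ?_, by field_simp; ring, ?_⟩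
  · rw [div_left_inj' h2] at h
    exact (mul_eq_zero.1 (by linear_combination h : 2 * r = 0)).resolve_left h2
  · field_simp
    linear_combination hr

lemma sq_eq_sum_mul_sub_one {R : Type*} [CommRing R] {α β t : R} (hsum : α + β = t)
    (hprod : α * β = 1) : α ^ 2 = algebraMap R R t * α - 1 := by
  rw [Algebra.algebraMap_self_apply, ← hsum]
  linear_combination -hprod

section Centralizer

variable {p : ℕ} [Fact p.Prime] {t : ZMod p} {Du : (M2 p)ˣ}

lemma mem_centralizer_iff_eq_affD (hDu : (Du : M2 p) = dMat t) (U : (M2 p)ˣ) :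
    U ∈ Subgroup.centralizer {Du} ↔
      (U : M2 p) = affD t ((U : M2 p) 0 0) ((U : M2 p) 1 0) := by
  rw [Subgroup.mem_centralizer_singleton_iff, ← commute_dMat_iff, ← hDu, Units.ext_iff]
  exact eq_comm

lemma scalarUnits_le_centralizer (Du : (M2 p)ˣ) : scalarUnits p ≤ Subgroup.centralizer {Du} := by
  refine le_trans ?_ (Subgroup.center_le_centralizer _)
  rintro _ ⟨c, rfl⟩
  rw [Subgroup.mem_center_iff]
  intro g
  ext : 1
  exact (Algebra.commutes _ _).symm

lemma card_scalarUnits : Nat.card (scalarUnits p) = p - 1 := by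
  have hinj := Units.map_injective (f := (algebraMap (ZMod p) (M2 p)).toMonoidHom)
    (algebraMap (ZMod p) (M2 p)).injective
  rw [scalarUnits, ← Nat.card_congr (MonoidHom.ofInjective hinj).toEquiv,
    Nat.card_eq_fintype_card, ZMod.card_units]

/-- The coordinates `(a, b)` of `U = a + b D_t`. -/
def coords (U : Subgroup.centralizer {Du}) : ZMod p × ZMod p :=
  (((U : (M2 p)ˣ) : M2 p) 0 0, ((U : (M2 p)ˣ) : M2 p) 1 0)

lemma coords_eq_of_coe_eq_affD {U : Subgroup.centralizer {Du}} {a b : ZMod p}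
    (h : ((U : (M2 p)ˣ) : M2 p) = affD t a b) : coords U = (a, b) := by
  simp [coords, h]

lemma coe_eq_affD_coords (hDu : (Du : M2 p) = dMat t) (U : Subgroup.centralizer {Du}) :
    ((U : (M2 p)ˣ) : M2 p) = affD t (coords U).1 (coords U).2 :=
  (mem_centralizer_iff_eq_affD hDu U).1 U.2

lemma det_affD_coords_ne_zero (hDu : (Du : M2 p) = dMat t) (U : Subgroup.centralizer {Du}) :
    (affD t (coords U).1 (coords U).2).det ≠ 0 := by
  rw [← coe_eq_affD_coords hDu]
  exact ((isUnit_iff_isUnit_det _).1 (U : (M2 p)ˣ).isUnit).ne_zero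

lemma coords_mul (hDu : (Du : M2 p) = dMat t) (U V : Subgroup.centralizer {Du}) :
    coords (U * V) =
      ((coords U).1 * (coords V).1 - (coords U).2 * (coords V).2,
        (coords U).1 * (coords V).2 + (coords U).2 * (coords V).1 +
          t * ((coords U).2 * (coords V).2)) := by
  have h : (((U * V : Subgroup.centralizer {Du}) : (M2 p)ˣ) : M2 p) =
      affD t (coords U).1 (coords U).2 * affD t (coords V).1 (coords V).2 := by
    rw [← coe_eq_affD_coords hDu, ← coe_eq_affD_coords hDu]
    rfl
  rw [affD_mul] at h
  exact coords_eq_of_coe_eq_affD h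

noncomputable def coordsEquiv (hDu : (Du : M2 p) = dMat t) :
    Subgroup.centralizer {Du} ≃ {v : ZMod p × ZMod p // (affD t v.1 v.2).det ≠ 0} where
  toFun U := ⟨coords U, det_affD_coords_ne_zero hDu U⟩
  invFun v :=
    ⟨((isUnit_iff_isUnit_det _).2 (isUnit_iff_ne_zero.2 v.2)).unit, by
      rw [mem_centralizer_iff_eq_affD hDu, IsUnit.unit_spec]
      simp⟩
  left_inv U := by
    ext : 2
    rw [IsUnit.unit_spec, ← coe_eq_affD_coords hDu]
  right_inv v := by
    ext <;> simp [coords]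

lemma coords_coordsEquiv_symm (hDu : (Du : M2 p) = dMat t)
    (v : {v : ZMod p × ZMod p // (affD t v.1 v.2).det ≠ 0}) :
    coords ((coordsEquiv hDu).symm v) = v :=
  congrArg Subtype.val ((coordsEquiv hDu).apply_symm_apply v)

lemma mem_scalarUnits_subgroupOf_iff (hDu : (Du : M2 p) = dMat t)
    (U : Subgroup.centralizer {Du}) :
    U ∈ (scalarUnits p).subgroupOf (Subgroup.centralizer {Du}) ↔ (coords U).2 = 0 := by
  rw [Subgroup.mem_subgroupOf]
  constructor
  · rintro ⟨c, hc⟩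
    have h : ((U : (M2 p)ˣ) : M2 p) = affD t c 0 := by
      rw [← hc, ← algebraMap_eq_affD]
      rfl
    rw [coords_eq_of_coe_eq_affD h]
  · intro hb
    have ha : (coords U).1 ≠ 0 := by
      have h := det_affD_coords_ne_zero hDu U
      rw [hb, det_affD] at h
      simpa using h
    refine ⟨Units.mk0 _ ha, Units.ext ?_⟩
    rw [coe_eq_affD_coords hDu, hb]
    exact algebraMap_eq_affD t _

variable {K : Type*} [Field K] [Algebra (ZMod p) K] {θ : K}

/-- `U ↦ a + bθ`: the eigenvalue of `U = a + b D_t` on the `θ`-eigenline of `D_t`. -/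
noncomputable def eigenvalueHom (hDu : (Du : M2 p) = dMat t)
    (hθ : θ ^ 2 = algebraMap (ZMod p) K t * θ - 1) : Subgroup.centralizer {Du} →* Kˣ where
  toFun U :=
    Units.mk0 (algebraMap (ZMod p) K (coords U).1 + algebraMap (ZMod p) K (coords U).2 * θ)
      (left_ne_zero_of_mul <| by
        rw [← algebraMap_det_affD t hθ]
        exact (map_ne_zero _).2 (det_affD_coords_ne_zero hDu U))
  map_one' := Units.ext <| by simp [coords]
  map_mul' U V := Units.ext <| by
    simp only [Units.val_mul, Units.val_mk0, coords_mul hDu, map_add, map_sub, map_mul]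
    linear_combination
      (-algebraMap (ZMod p) K (coords U).2 * algebraMap (ZMod p) K (coords V).2) * hθ

lemma coe_eigenvalueHom_apply (hDu : (Du : M2 p) = dMat t)
    (hθ : θ ^ 2 = algebraMap (ZMod p) K t * θ - 1) (U : Subgroup.centralizer {Du}) :
    (eigenvalueHom hDu hθ U : K) =
      algebraMap (ZMod p) K (coords U).1 + algebraMap (ZMod p) K (coords U).2 * θ :=
  rfl

lemma ker_mk'_comp_eigenvalueHom (hDu : (Du : M2 p) = dMat t)
    (hθ : θ ^ 2 = algebraMap (ZMod p) K t * θ - 1)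
    (hθF : θ ∉ Set.range (algebraMap (ZMod p) K)) :
    ((QuotientGroup.mk' (Units.map (algebraMap (ZMod p) K).toMonoidHom).range).comp
      (eigenvalueHom hDu hθ)).ker = (scalarUnits p).subgroupOf (Subgroup.centralizer {Du}) := by
  ext U
  rw [MonoidHom.mem_ker, MonoidHom.comp_apply, QuotientGroup.mk'_apply, QuotientGroup.eq_one_iff,
    mem_scalarUnits_subgroupOf_iff hDu]
  constructor
  · rintro ⟨c, hc⟩
    by_contra hb
    refine hθF ⟨((c : ZMod p) - (coords U).1) / (coords U).2, ?_⟩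
    have hc' := congrArg Units.val hc
    rw [coe_eigenvalueHom_apply, Units.coe_map] at hc'
    have hbK : algebraMap (ZMod p) K (coords U).2 ≠ 0 := (map_ne_zero _).2 hb
    rw [map_div₀, map_sub, div_eq_iff hbK]
    linear_combination hc'
  · intro hb
    have ha : (coords U).1 ≠ 0 := by
      have h := det_affD_coords_ne_zero hDu U
      rw [hb, det_affD] at h
      simpa using h
    refine ⟨Units.mk0 _ ha, Units.ext ?_⟩
    simp [coe_eigenvalueHom_apply, hb]

variable {α β : ZMod p}

noncomputable def eigenvalueRatioHom (hDu : (Du : M2 p) = dMat t) (hsum : α + β = t)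
    (hprod : α * β = 1) : Subgroup.centralizer {Du} →* (ZMod p)ˣ :=
  eigenvalueHom hDu (sq_eq_sum_mul_sub_one hsum hprod) /
    eigenvalueHom hDu
      (sq_eq_sum_mul_sub_one ((add_comm β α).trans hsum) ((mul_comm β α).trans hprod))

lemma ker_eigenvalueRatioHom (hDu : (Du : M2 p) = dMat t) (hne : α ≠ β) (hsum : α + β = t)
    (hprod : α * β = 1) :
    (eigenvalueRatioHom hDu hsum hprod).ker =
      (scalarUnits p).subgroupOf (Subgroup.centralizer {Du}) := by
  ext U
  rw [MonoidHom.mem_ker, eigenvalueRatioHom, MonoidHom.div_apply, div_eq_one, Units.ext_iff,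
    coe_eigenvalueHom_apply, coe_eigenvalueHom_apply, mem_scalarUnits_subgroupOf_iff hDu]
  simp only [Algebra.algebraMap_self_apply]
  constructor
  · intro h
    have : (coords U).2 * (α - β) = 0 := by linear_combination h
    exact (mul_eq_zero.1 this).resolve_right (sub_ne_zero.2 hne)
  · intro h
    simp [h]

lemma eigenvalueRatioHom_surjective (hDu : (Du : M2 p) = dMat t) (hne : α ≠ β)
    (hsum : α + β = t) (hprod : α * β = 1) :
    Function.Surjective (eigenvalueRatioHom hDu hsum hprod) := by
  intro u
  -- solve `a + bα = u`, `a + bβ = 1`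
  set b := ((u : ZMod p) - 1) / (α - β)
  set a := 1 - b * β
  have hα : a + b * α = u := by
    simp only [a, b]
    field_simp [sub_ne_zero.2 hne]
    ring
  have hβ : a + b * β = 1 := by ring
  have hdet : (affD t a b).det ≠ 0 := by
    have h := algebraMap_det_affD (S := ZMod p) t (sq_eq_sum_mul_sub_one hsum hprod) a b
    simp only [Algebra.algebraMap_self_apply, ← hsum, add_sub_cancel_left] at h
    rw [hsum] at h
    rw [h, hα, hβ, mul_one]
    exact u.ne_zero
  refine ⟨(coordsEquiv hDu).symm ⟨(a, b), hdet⟩, Units.ext ?_⟩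
  rw [eigenvalueRatioHom, MonoidHom.div_apply, Units.val_div_eq_div_val, coe_eigenvalueHom_apply,
    coe_eigenvalueHom_apply, coords_coordsEquiv_symm]
  simp only [Algebra.algebraMap_self_apply, hα, hβ, div_one]

noncomputable def quotientScalarUnitsMulEquivUnits (hDu : (Du : M2 p) = dMat t) (hne : α ≠ β)
    (hsum : α + β = t) (hprod : α * β = 1) :
    Subgroup.centralizer {Du} ⧸ (scalarUnits p).subgroupOf (Subgroup.centralizer {Du}) ≃*
      (ZMod p)ˣ :=
  (QuotientGroup.quotientMulEquivOfEq (ker_eigenvalueRatioHom hDu hne hsum hprod).symm).trans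
    (QuotientGroup.quotientKerEquivOfSurjective _
      (eigenvalueRatioHom_surjective hDu hne hsum hprod))

open Polynomial in
lemma isCyclic_quotient_scalarUnits_of_not_exists_sq (hDu : (Du : M2 p) = dMat t)
    (hsq : ¬ ∃ r : ZMod p, t ^ 2 - 4 = r ^ 2) :
    IsCyclic
      (Subgroup.centralizer {Du} ⧸ (scalarUnits p).subgroupOf (Subgroup.centralizer {Du})) := by
  set f : (ZMod p)[X] := X ^ 2 - C t * X + 1
  have hf : f.Monic := by simp only [f]; monicity!
  have hdeg : f.natDegree = 2 := by simp only [f]; compute_degree!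
  have : Fact (Irreducible f) := ⟨irreducible_of_degree_le_three_of_not_isRoot
    (by rw [hdeg]; decide) fun z hz => sq_sub_mul_add_one_ne_zero hsq z (by simpa [f] using hz)⟩
  have : Module.Finite (ZMod p) (AdjoinRoot f) := hf.finite_adjoinRoot
  have : Finite (AdjoinRoot f) := Module.finite_of_finite (ZMod p)
  have hθ : AdjoinRoot.root f ^ 2 = algebraMap (ZMod p) _ t * AdjoinRoot.root f - 1 := by
    have h := AdjoinRoot.eval₂_root f
    simp only [f, eval₂_add, eval₂_sub, eval₂_mul, eval₂_pow, eval₂_X, eval₂_C, eval₂_one] at h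
    rw [AdjoinRoot.algebraMap_eq]
    linear_combination h
  have hθF : AdjoinRoot.root f ∉ Set.range (algebraMap (ZMod p) (AdjoinRoot f)) := by
    rintro ⟨c, hc⟩
    refine sq_sub_mul_add_one_ne_zero hsq c ((algebraMap (ZMod p) (AdjoinRoot f)).injective ?_)
    rw [map_add, map_sub, map_mul, map_pow, map_one, map_zero, hc]
    linear_combination hθ
  exact (QuotientGroup.quotientMulEquivOfEq (ker_mk'_comp_eigenvalueHom hDu hθ hθF)).isCyclic.1
    (isCyclic_of_injective _ (QuotientGroup.kerLift_injective _))

lemma card_quotient_scalarUnits_of_not_exists_sq (hDu : (Du : M2 p) = dMat t)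
    (hsq : ¬ ∃ r : ZMod p, t ^ 2 - 4 = r ^ 2) :
    Nat.card (Subgroup.centralizer {Du} ⧸ (scalarUnits p).subgroupOf (Subgroup.centralizer {Du})) =
      p + 1 := by
  have hC : Nat.card (Subgroup.centralizer {Du}) = p * p - 1 := by
    rw [Nat.card_congr ((coordsEquiv hDu).trans (Equiv.subtypeEquivRight fun v =>
      det_affD_ne_zero_iff (sq_sub_mul_add_one_ne_zero hsq) v.1 v.2))]
    simp [Nat.card_eq_fintype_card, ZMod.card]
  have hS : Nat.card ((scalarUnits p).subgroupOf (Subgroup.centralizer {Du})) = p - 1 := by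
    rw [Nat.card_congr (Subgroup.subgroupOfEquivOfLe (scalarUnits_le_centralizer Du)).toEquiv,
      card_scalarUnits]
  have h := Subgroup.card_eq_card_quotient_mul_card_subgroup
    ((scalarUnits p).subgroupOf (Subgroup.centralizer {Du}))
  rw [hC, hS] at h
  have hp := (Fact.out : p.Prime).two_le
  refine Nat.eq_of_mul_eq_mul_right (by omega : 0 < p - 1) (h.symm.trans ?_)
  zify [(by omega : 1 ≤ p), Nat.one_le_iff_ne_zero.2 (by positivity : p * p ≠ 0)]
  ring

end Centralizer

theorem stmt_15 (p : ℕ) [Fact (Nat.Prime p)] (hodd : p ≠ 2)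
    (t : ZMod p) (ht : t ^ 2 - 4 ≠ 0)
    (Du : (M2 p)ˣ) (hDu : (Du : M2 p) = !![0, -1; 1, t]) :
    IsCyclic ((Subgroup.centralizer {Du}) ⧸
        ((scalarUnits p).subgroupOf (Subgroup.centralizer {Du}))) ∧
      ((∃ r : ZMod p, r ≠ 0 ∧ t ^ 2 - 4 = r ^ 2) →
        Nat.card ((Subgroup.centralizer {Du}) ⧸
          ((scalarUnits p).subgroupOf (Subgroup.centralizer {Du}))) = p - 1) ∧
      ((¬ ∃ r : ZMod p, t ^ 2 - 4 = r ^ 2) →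
        Nat.card ((Subgroup.centralizer {Du}) ⧸
          ((scalarUnits p).subgroupOf (Subgroup.centralizer {Du}))) = p + 1) := by
  by_cases hsq : ∃ r : ZMod p, t ^ 2 - 4 = r ^ 2
  · obtain ⟨r, hr⟩ := hsq
    have hr0 : r ≠ 0 := by
      rintro rfl
      exact ht (by simpa using hr)
    have h2 : (2 : ZMod p) ≠ 0 := Ring.two_ne_zero (by rwa [ZMod.ringChar_zmod_n])
    obtain ⟨α, β, hne, hsum, hprod⟩ := exists_roots_of_discr_eq_sq h2 hr0 hr
    let e := quotientScalarUnitsMulEquivUnits hDu hne hsum hprod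
    refine ⟨e.isCyclic.2 inferInstance, fun _ => ?_, fun h => (h ⟨r, hr⟩).elim⟩
    rw [Nat.card_congr e.toEquiv, Nat.card_eq_fintype_card, ZMod.card_units]
  · exact ⟨isCyclic_quotient_scalarUnits_of_not_exists_sq hDu hsq,
      fun ⟨r, _, hr⟩ => (hsq ⟨r, hr⟩).elim,
      fun _ => card_quotient_scalarUnits_of_not_exists_sq hDu hsq⟩
end

section
/- For any rational t with t ≠ 0, ±1, ±2, there are no elements of finite order k ≥ 2 in the projectivized group L(t) of invertible elements of R(t,1) modulo rational scalars, except possibly k ∈ {2, 3, 4, 6}. -/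
open Matrix Polynomial

/-!
Every `X` commuting with `D_t` is `a + b D_t`, and for each root `ρ` of `x² - t x + 1` the map
`a + b D_t ↦ a + b ρ` is multiplicative. For `t ≠ ±2` there are two distinct complex roots
`ρ₁, ρ₂`, and `X ^ j` is scalar exactly when the two eigenvalues `μᵢ = a + b ρᵢ` have equal
`j`-th powers. So `ζ = μ₁ / μ₂` is a primitive `k`-th root of unity. Since
`ζ + ζ⁻¹ = (tr X ^ 2 - 2 det X) / det X` is rational, `ζ` has degree at most `2` over `ℚ`,
hence `φ k ≤ 2`, which forces `k ∈ {1, 2, 3, 4, 6}`.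
-/

def D {R : Type*} [CommRing R] (t : R) : Matrix (Fin 2) (Fin 2) R := !![0, -1; 1, t]

section Commutant

variable {R : Type*} [CommRing R] {t : R} {X : Matrix (Fin 2) (Fin 2) R}

theorem entries_of_commute_D (h : Commute X (D t)) :
    X 0 1 = -X 1 0 ∧ X 1 1 = X 0 0 + t * X 1 0 := by
  have e := fun i j => congrFun (congrFun h.eq i) j
  exact ⟨by simpa [D, mul_apply] using e 0 0, by simpa [D, mul_apply] using e 1 0⟩

theorem eq_smul_one_of_commute_D (h : Commute X (D t)) (h₁₀ : X 1 0 = 0) : X = X 0 0 • 1 := by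
  obtain ⟨h₀₁, h₁₁⟩ := entries_of_commute_D h
  ext i j
  fin_cases i <;> fin_cases j <;> simp [h₀₁, h₁₁, h₁₀]

end Commutant

section Eval

variable {R S : Type*} [CommRing R] [CommRing S] [Algebra R S] {t : R}

/-- For a root `ρ` of `x² - t x + 1`, the eigenvalue of `X` on the common eigenvector `(1, -ρ)`
of the commutant of `D t`. -/
def evalAt (ρ : S) (X : Matrix (Fin 2) (Fin 2) R) : S :=
  algebraMap R S (X 0 0) + algebraMap R S (X 1 0) * ρ

theorem evalAt_smul_one (ρ : S) (c : R) :
    evalAt ρ (c • 1 : Matrix (Fin 2) (Fin 2) R) = algebraMap R S c := by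
  simp [evalAt]

theorem evalAt_mul {ρ : S} (hρ : ρ ^ 2 - algebraMap R S t * ρ + 1 = 0)
    {X : Matrix (Fin 2) (Fin 2) R} (hX : Commute X (D t)) (Y : Matrix (Fin 2) (Fin 2) R) :
    evalAt ρ (X * Y) = evalAt ρ X * evalAt ρ Y := by
  obtain ⟨hX₀₁, hX₁₁⟩ := entries_of_commute_D hX
  simp only [evalAt, mul_apply, Fin.sum_univ_two, hX₀₁, hX₁₁, map_add, map_mul, map_neg]
  linear_combination (-(algebraMap R S (X 1 0) * algebraMap R S (Y 1 0))) * hρ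

theorem evalAt_pow {ρ : S} (hρ : ρ ^ 2 - algebraMap R S t * ρ + 1 = 0)
    {X : Matrix (Fin 2) (Fin 2) R} (hX : Commute X (D t)) (n : ℕ) :
    evalAt ρ (X ^ n) = evalAt ρ X ^ n := by
  induction n with
  | zero => simpa using evalAt_smul_one ρ (1 : R)
  | succ n ih => rw [pow_succ', evalAt_mul hρ hX, ih, pow_succ']

variable {ρ₁ ρ₂ : S} {X : Matrix (Fin 2) (Fin 2) R}

theorem evalAt_add_evalAt (hsum : ρ₁ + ρ₂ = algebraMap R S t) (hX : Commute X (D t)) :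
    evalAt ρ₁ X + evalAt ρ₂ X = algebraMap R S X.trace := by
  obtain ⟨-, hX₁₁⟩ := entries_of_commute_D hX
  simp only [evalAt, trace_fin_two, hX₁₁, map_add, map_mul]
  linear_combination algebraMap R S (X 1 0) * hsum

theorem evalAt_mul_evalAt (hsum : ρ₁ + ρ₂ = algebraMap R S t) (hprod : ρ₁ * ρ₂ = 1)
    (hX : Commute X (D t)) : evalAt ρ₁ X * evalAt ρ₂ X = algebraMap R S X.det := by
  obtain ⟨hX₀₁, hX₁₁⟩ := entries_of_commute_D hX
  simp only [evalAt, det_fin_two, hX₀₁, hX₁₁, map_add, map_mul, map_sub, map_neg]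
  linear_combination algebraMap R S (X 0 0) * algebraMap R S (X 1 0) * hsum
    + algebraMap R S (X 1 0) ^ 2 * hprod

end Eval

section Field

variable {K L : Type*} [Field K] [Field L] [Algebra K L] {t : K} {ρ₁ ρ₂ : L}

theorem evalAt_eq_evalAt_iff (hρ : ρ₁ ≠ ρ₂) (X : Matrix (Fin 2) (Fin 2) K) :
    evalAt ρ₁ X = evalAt ρ₂ X ↔ X 1 0 = 0 := by
  simp [evalAt, hρ]

theorem exists_pow_eq_smul_one_iff (h₁ : ρ₁ ^ 2 - algebraMap K L t * ρ₁ + 1 = 0)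
    (h₂ : ρ₂ ^ 2 - algebraMap K L t * ρ₂ + 1 = 0) (hρ : ρ₁ ≠ ρ₂)
    {X : Matrix (Fin 2) (Fin 2) K} (hX : Commute X (D t))
    (hμ₁ : evalAt ρ₁ X ≠ 0) (hμ₂ : evalAt ρ₂ X ≠ 0) (n : ℕ) :
    (∃ c : K, c ≠ 0 ∧ X ^ n = c • 1) ↔ (evalAt ρ₁ X / evalAt ρ₂ X) ^ n = 1 := by
  rw [div_pow, div_eq_one_iff_eq (pow_ne_zero n hμ₂), ← evalAt_pow h₁ hX, ← evalAt_pow h₂ hX,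
    evalAt_eq_evalAt_iff hρ]
  constructor
  · rintro ⟨c, -, hc⟩
    simp [hc]
  · intro h₁₀
    refine ⟨(X ^ n) 0 0, fun h₀₀ => pow_ne_zero n hμ₁ ?_,
      eq_smul_one_of_commute_D (hX.pow_left n) h₁₀⟩
    rw [← evalAt_pow h₁ hX, evalAt, h₀₀, h₁₀]
    simp

theorem natDegree_minpoly_div_le_two {μ₁ μ₂ : L} {s p : K} (hsum : μ₁ + μ₂ = algebraMap K L s)
    (hprod : μ₁ * μ₂ = algebraMap K L p) (hμ₂ : μ₂ ≠ 0) (hp : p ≠ 0) :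
    (minpoly K (μ₁ / μ₂)).natDegree ≤ 2 := by
  set q : K[X] := X ^ 2 - C ((s ^ 2 - 2 * p) / p) * X + 1
  have hq : q.Monic := by unfold q; monicity!
  have hqμ : aeval (μ₁ / μ₂) q = 0 := by
    have hμ₁ : μ₁ ≠ 0 := left_ne_zero_of_mul (hprod ▸ (_root_.map_ne_zero _).2 hp)
    simp only [q, map_add, map_sub, map_mul, map_pow, aeval_X, aeval_C, map_one, map_div₀,
      map_ofNat]
    rw [← hsum, ← hprod]
    field_simp
    ring
  have hdeg : q.natDegree = 2 := by unfold q; compute_degree!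
  exact hdeg ▸ natDegree_le_natDegree (minpoly.min K _ hq hqμ)

end Field

theorem exists_ne_add_eq_mul_eq_one {L : Type*} [Field L] [IsSepClosed L] [NeZero (2 : L)] {t : L}
    (h₂ : t ≠ 2) (hneg : t ≠ -2) : ∃ ρ₁ ρ₂ : L, ρ₁ ≠ ρ₂ ∧ ρ₁ + ρ₂ = t ∧ ρ₁ * ρ₂ = 1 := by
  obtain ⟨δ, hδ⟩ := IsSepClosed.exists_eq_mul_self (t ^ 2 - 4)
  refine ⟨(t + δ) / 2, (t - δ) / 2, fun h => ?_, by field_simp; ring,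
    by field_simp; linear_combination hδ⟩
  have hδ₀ : δ = 0 := by
    have : 2 * δ = 0 := by linear_combination (div_left_inj' two_ne_zero).1 h
    exact (mul_eq_zero.1 this).resolve_left two_ne_zero
  have : (t - 2) * (t + 2) = 0 := by linear_combination hδ + δ * hδ₀
  rcases mul_eq_zero.1 this with h | h
  · exact h₂ (sub_eq_zero.1 h)
  · exact hneg (eq_neg_of_add_eq_zero_left h)

theorem mem_of_totient_le_two {k : ℕ} (hk : k ≠ 0) (h : k.totient ≤ 2) :
    k ∈ ({1, 2, 3, 4, 6} : Finset ℕ) := by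
  have hpos : 0 < k.totient := Nat.totient_pos.2 (Nat.pos_of_ne_zero hk)
  have h5 : ¬ 5 ∣ k := fun h5 => by
    have := Nat.le_of_dvd hpos (Nat.totient_dvd_of_dvd h5)
    rw [Nat.totient_prime (by norm_num)] at this
    omega
  -- `5` is a unit mod `k`, of order dividing `φ k ∣ 2`.
  have h24 : k ∣ 24 := by
    obtain ⟨m, hm⟩ : k.totient ∣ 2 := by interval_cases k.totient <;> norm_num
    have hcop : Nat.Coprime 5 k := (Nat.Prime.coprime_iff_not_dvd (by norm_num)).2 h5
    have h25 : 5 ^ 2 ≡ 1 [MOD k] := by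
      simpa [hm, pow_mul] using (Nat.ModEq.pow_totient hcop).pow m
    exact (Nat.modEq_iff_dvd' (by norm_num)).mp h25.symm
  have : k ≤ 24 := Nat.le_of_dvd (by norm_num) h24
  interval_cases k <;> revert h h24 <;> decide

theorem stmt_16 (t : ℚ) (ht : t ≠ 0 ∧ t ≠ 1 ∧ t ≠ -1 ∧ t ≠ 2 ∧ t ≠ -2)
    (Dt : Matrix (Fin 2) (Fin 2) ℚ) (hDt : Dt = !![0, -1; 1, t])
    (X : Matrix (Fin 2) (Fin 2) ℚ) (hcomm : X * Dt = Dt * X) (hdet : X.det ≠ 0)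
    (k : ℕ) (hk : 2 ≤ k)
    (hord : ∃ c : ℚ, c ≠ 0 ∧ X ^ k = c • (1 : Matrix (Fin 2) (Fin 2) ℚ))
    (hmin : ∀ j : ℕ, 1 ≤ j → j < k →
      ¬ ∃ c : ℚ, c ≠ 0 ∧ X ^ j = c • (1 : Matrix (Fin 2) (Fin 2) ℚ)) :
    k ∈ ({2, 3, 4, 6} : Set ℕ) := by
  obtain ⟨-, -, -, ht₂, htneg⟩ := ht
  replace hcomm : Commute X (D t) := by subst hDt; exact hcomm
  obtain ⟨ρ₁, ρ₂, hρ, hsum, hprod⟩ :=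
    exists_ne_add_eq_mul_eq_one (t := algebraMap ℚ ℂ t) (by rw [eq_ratCast]; exact_mod_cast ht₂)
      (by rw [eq_ratCast]; exact_mod_cast htneg)
  have hroot₁ : ρ₁ ^ 2 - algebraMap ℚ ℂ t * ρ₁ + 1 = 0 := by linear_combination ρ₁ * hsum - hprod
  have hroot₂ : ρ₂ ^ 2 - algebraMap ℚ ℂ t * ρ₂ + 1 = 0 := by linear_combination ρ₂ * hsum - hprod
  have hμ : evalAt ρ₁ X * evalAt ρ₂ X ≠ 0 := by
    rw [evalAt_mul_evalAt hsum hprod hcomm]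
    exact (_root_.map_ne_zero _).2 hdet
  have hscalar := exists_pow_eq_smul_one_iff hroot₁ hroot₂ hρ hcomm (left_ne_zero_of_mul hμ)
    (right_ne_zero_of_mul hμ)
  have hζ : IsPrimitiveRoot (evalAt ρ₁ X / evalAt ρ₂ X) k :=
    .mk_of_lt _ (by omega) ((hscalar k).1 hord) fun j hj hjk => (hscalar j).not.1 (hmin j hj hjk)
  have hdeg := natDegree_minpoly_div_le_two (evalAt_add_evalAt hsum hcomm)
    (evalAt_mul_evalAt hsum hprod hcomm) (right_ne_zero_of_mul hμ) hdet
  rw [← cyclotomic_eq_minpoly_rat hζ (by omega), natDegree_cyclotomic] at hdeg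
  have := mem_of_totient_le_two (by omega) hdeg
  simp only [Finset.mem_insert, Finset.mem_singleton] at this
  simp only [Set.mem_insert_iff, Set.mem_singleton_iff]
  omega
end

section
/- Suppose t is rational with t² - 4 = -3f² for a rational f ≠ 0. Then the element S = -(1/(2f))·M of R(t,1), where M is the element of R(t,1) with second row [2, t+f], satisfies det S = 1, trace S = -1, and S³ = I. Moreover the only elements X of R(t,1) with det X = 1 and X³ = I, X ≠ I, are S and its inverse R = (1/(2f))·N, where N is the element of R(t,1) with second row [2, t - f]. -/
set_option maxHeartbeats 1000000 in
theorem stmt_17 (t f : ℚ) (hf : f ≠ 0) (hcubic : t ^ 2 - 4 = -3 * f ^ 2)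
    (Dt : Matrix (Fin 2) (Fin 2) ℚ) (hDt : Dt = !![0, -1; 1, t])
    (S R : Matrix (Fin 2) (Fin 2) ℚ)
    (hS : S = -(1 / (2 * f)) • !![(t + f) - t * 2, -2; 2, t + f])
    (hR : R = (1 / (2 * f)) • !![(t - f) - t * 2, -2; 2, t - f]) :
    S.det = 1 ∧ Matrix.trace S = -1 ∧ S ^ 3 = 1 ∧ S * R = 1 ∧
      ∀ X : Matrix (Fin 2) (Fin 2) ℚ, X * Dt = Dt * X → X.det = 1 → X ^ 3 = 1 →
        X ≠ 1 → X = S ∨ X = R := by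
  subst hDt hS hR
  refine ⟨?_, ?_, ?_, ?_, ?_⟩
  · simp [Matrix.det_fin_two]
    field_simp
    linear_combination (-1 : ℚ) * hcubic
  · simp [Matrix.trace_fin_two]
    field_simp
    ring
  · rw [pow_succ, pow_two]
    ext i j
    fin_cases i <;> fin_cases j <;>
      simp [Matrix.mul_apply, Fin.sum_univ_two, Matrix.one_apply] <;>
      field_simp <;>
      first
        | linear_combination (4*f^7*(t-3*f)) * hcubic
        | linear_combination (8*f^7) * hcubic
        | linear_combination (-8*f^7 : ℚ) * hcubic
        | linear_combination (-4*f^7*(t+3*f)) * hcubic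
        | ring1
        | linear_combination (t - 3*f) * hcubic
        | linear_combination (-(t + 3*f)) * hcubic
        | linarith
  · ext i j
    fin_cases i <;> fin_cases j <;>
      simp [Matrix.mul_apply, Fin.sum_univ_two, Matrix.one_apply] <;>
      field_simp <;>
      first
        | ring1
        | linear_combination (f^2 : ℚ) * hcubic
        | linear_combination (-f^2 : ℚ) * hcubic
        | linear_combination hcubic
        | linear_combination (-1 : ℚ) * hcubic
        | linarith
  · intro X hcomm hdet hX3 hne
    have e1 := congrFun (congrFun hcomm 0) 0
    have e2 := congrFun (congrFun hcomm 0) 1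
    simp [Matrix.mul_apply, Fin.sum_univ_two] at e1 e2
    obtain ⟨c, d, hXmat⟩ : ∃ c d, X = !![d - t * c, -c; c, d] := by
      refine ⟨X 1 0, X 1 1, ?_⟩
      ext i j
      fin_cases i <;> fin_cases j <;> simp <;>
        first
          | linear_combination -e2 + t * e1
          | linear_combination e1
          | linarith [e1, e2]
    subst hXmat
    have h3 : (!![d - t * c, -c; c, d] : Matrix (Fin 2) (Fin 2) ℚ) *
        !![d - t * c, -c; c, d] * !![d - t * c, -c; c, d] = 1 := by
      rw [← pow_two, ← pow_succ]; exact hX3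
    have f00 := congrFun (congrFun h3 0) 0
    have f10 := congrFun (congrFun h3 1) 0
    have f11 := congrFun (congrFun h3 1) 1
    simp [Matrix.mul_apply, Fin.sum_univ_two, Matrix.one_apply] at f00 f10 f11
    simp [Matrix.det_fin_two] at hdet
    by_cases hc0 : c = 0
    · exfalso
      subst hc0
      simp at f11
      have hd1 : d = 1 := by
        have hfac : (d - 1) * (d ^ 2 + d + 1) = 0 := by linear_combination f11
        have hpos : d ^ 2 + d + 1 > 0 := by nlinarith [sq_nonneg (2 * d + 1)]
        rcases mul_eq_zero.mp hfac with h | h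
        · linarith
        · linarith
      exact hne (by ext i j; fin_cases i <;> fin_cases j <;> simp [hd1, Matrix.one_apply])
    · have htr : 2 * d - t * c = -1 := by
        have h1 : c * ((d - t * c) ^ 2 + (d - t * c) * d + d ^ 2 - c ^ 2) = 0 := by
          linear_combination f10
        have h2 : (d - t * c) ^ 2 + (d - t * c) * d + d ^ 2 - c ^ 2 = 0 :=
          (mul_eq_zero.mp h1).resolve_left hc0
        have hsq : (2 * d - t * c) ^ 2 = 1 := by nlinarith [hdet, h2]
        have hfac : (2 * d - t * c - 1) * (2 * d - t * c + 1) = 0 := by nlinarith [hsq]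
        rcases mul_eq_zero.mp hfac with h | h
        · exfalso; nlinarith [f00, f11, hdet, h]
        · linarith
      have hcf : (c * f - 1) * (c * f + 1) = 0 := by nlinarith [hdet, htr, hcubic]
      rcases mul_eq_zero.mp hcf with h | h
      · right
        have hcv : c = 1 / f := by field_simp; linarith
        have hdv : d = (t - f) / (2 * f) := by
          rw [hcv] at htr; field_simp at htr ⊢; linarith
        ext i j
        fin_cases i <;> fin_cases j <;>
          simp [hcv, hdv] <;> field_simp <;> first | ring1 | exact Or.inl (mul_comm f 2)
      · left
        have hcv : c = -(1 / f) := by field_simp; linarith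
        have hdv : d = -((t + f) / (2 * f)) := by
          rw [hcv] at htr; field_simp at htr ⊢; linarith
        ext i j
        fin_cases i <;> fin_cases j <;>
          simp [hcv, hdv] <;> field_simp <;> first | ring1 | exact Or.inl (mul_comm f 2)
end

section
/- If X is an element of R(t,1) with det X = 1 and X³ = I but X ≠ I, then (t² - 4)·x₀² = -3 where [x₀, x₁] is the second row of X; consequently such X exists only when -3/(t² - 4) is a rational square. -/
theorem stmt_18 (t x0 x1 : ℚ)
    (X : Matrix (Fin 2) (Fin 2) ℚ) (hX : X = !![x1 - t * x0, -x0; x0, x1])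
    (hdet : X.det = 1) (hcube : X ^ 3 = 1) (hne : X ≠ 1) :
    (t ^ 2 - 4) * x0 ^ 2 = -3 ∧ ∃ r : ℚ, -3 / (t ^ 2 - 4) = r ^ 2 := by
  subst hX
  rw [Matrix.det_fin_two_of] at hdet
  rw [pow_succ, pow_succ, pow_one, Matrix.mul_fin_two, Matrix.mul_fin_two,
    Matrix.one_fin_two] at hcube
  have h10 := congrFun (congrFun hcube 1) 0
  have h11 := congrFun (congrFun hcube 1) 1
  simp at h10 h11
  have hne' : x0 ≠ 0 ∨ x1 ≠ 1 := by
    by_contra h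
    push_neg at h
    obtain ⟨h0, h1⟩ := h
    apply hne
    rw [h0, h1, Matrix.one_fin_two]
    norm_num
  set s := 2 * x1 - t * x0 with hs
  have hA : (s ^ 2 - 1) * x0 = 0 := by linear_combination h10 + x0 * hdet
  have hB : (s ^ 2 - 1) * x1 = s + 1 := by
    linear_combination h11 + (x1 + s) * hdet
  have key : s = -1 := by
    by_contra hk
    have hs1 : s ≠ 1 := by
      intro h1
      rw [h1] at hB
      linarith
    have hsq : s ^ 2 - 1 ≠ 0 := by
      intro h
      have : (s - 1) * (s + 1) = 0 := by linear_combination h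
      rcases mul_eq_zero.mp this with h' | h'
      · exact hs1 (by linarith)
      · exact hk (by linarith)
    have hx0 : x0 = 0 := by
      rcases mul_eq_zero.mp hA with h | h
      · exact absurd h hsq
      · exact h
    have hx1 : x1 = 1 := by
      have hdet' : x1 ^ 2 = 1 := by
        rw [hx0] at hdet; linear_combination hdet
      have hB' : (4 * x1 ^ 2 - 1) * x1 = 2 * x1 + 1 := by
        rw [hs, hx0] at hB; linear_combination hB
      nlinarith [hdet', hB']
    exact hne'.elim (fun h => h hx0) (fun h => h hx1)
  refine ⟨?_, ?_⟩
  · linear_combination (2 * x1 - t * x0 - 1) * key - 4 * hdet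
  · have h4 : t ^ 2 - 4 ≠ 0 := by
      intro h
      have : (t ^ 2 - 4) * x0 ^ 2 = -3 := by
        linear_combination (2 * x1 - t * x0 - 1) * key - 4 * hdet
      rw [h] at this
      norm_num at this
    refine ⟨x0, ?_⟩
    have hmain : (t ^ 2 - 4) * x0 ^ 2 = -3 := by
      linear_combination (2 * x1 - t * x0 - 1) * key - 4 * hdet
    field_simp
    linear_combination -hmain
end

section
/- Let p be an odd prime and t ∈ F_p with t² ≠ 4, and let {xₙ}_{n∈ℤ} be a sequence in F_p with x_{n+1} = t·xₙ - x_{n-1}, not identically zero, such that xₖ = 0 for some k. If X denotes the corresponding matrix [[x₁ - t·x₀, -x₀],[x₀, x₁]] and det X ≠ 0, then in the cyclic group L_p(t) (invertible matrices commuting with D_t modulo scalars), the order of X divides the order of D_t. -/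
open Matrix

theorem mem_centralizer_self {G : Type*} [Group G] (a : G) :
    a ∈ Subgroup.centralizer {a} := by
  rw [Subgroup.mem_centralizer_iff]
  rintro y hy
  rw [Set.mem_singleton_iff] at hy
  subst hy; rfl

/-! The recurrence says exactly that `X_n * D_t = X_{n+1}`, where `X_n` is the matrix with second
row `[x_n, x_{n+1}]`, so `X * D_t ^ n = X_n` for every `n : ℤ`. At a zero `x_k = 0` the matrix `X_k`
is the scalar `x_{k+1}`, hence `X ≡ D_t ^ (-k)` modulo scalars and the order of `X` divides that
of `D_t`. -/

section SequenceMatrix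

variable {R : Type*} [CommRing R]

/-- `X_n` in the notation of the header; `X = seqMatrix t x 0`. -/
def seqMatrix (t : R) (x : ℤ → R) (n : ℤ) : Matrix (Fin 2) (Fin 2) R :=
  !![x (n + 1) - t * x n, -(x n); x n, x (n + 1)]

theorem seqMatrix_mul_companion {t : R} {x : ℤ → R}
    (hrec : ∀ n : ℤ, x (n + 1) = t * x n - x (n - 1)) (n : ℤ) :
    seqMatrix t x n * !![0, -1; 1, t] = seqMatrix t x (n + 1) := by
  have hnext : x (n + 1 + 1) = t * x (n + 1) - x n := by simpa using hrec (n + 1)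
  ext i j
  fin_cases i <;> fin_cases j <;>
    simp [seqMatrix, Matrix.mul_apply, Fin.sum_univ_succ, hnext] <;> ring

theorem seqMatrix_of_eq_zero {t : R} {x : ℤ → R} {k : ℤ} (hk : x k = 0) :
    seqMatrix t x k = algebraMap R (Matrix (Fin 2) (Fin 2) R) (x (k + 1)) := by
  ext i j
  fin_cases i <;> fin_cases j <;> simp [seqMatrix, hk, Algebra.algebraMap_eq_smul_one]

end SequenceMatrix

theorem Units.val_mul_zpow_eq_of_mul_eq {M : Type*} [Monoid M] {u D : Mˣ} {f : ℤ → M}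
    (h0 : (u : M) = f 0) (hstep : ∀ n, f n * D = f (n + 1)) (n : ℤ) :
    ((u * D ^ n : Mˣ) : M) = f n := by
  induction n using Int.induction_on with
  | zero => simpa using h0
  | succ n ih => rw [_root_.zpow_add_one, ← mul_assoc, Units.val_mul, ih, hstep]
  | pred n ih =>
    have hprev := hstep (-(n : ℤ) - 1)
    rw [sub_add_cancel] at hprev
    rw [_root_.zpow_sub_one, ← mul_assoc, Units.val_mul, ih, ← hprev, mul_assoc, Units.mul_inv, mul_one]

theorem mem_scalarUnits_of_val_eq_algebraMap {p : ℕ} {u : (M2 p)ˣ} {c : ZMod p}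
    (hu : (u : M2 p) = algebraMap (ZMod p) (M2 p) c) : u ∈ scalarUnits p := by
  have hdet : IsUnit (c ^ 2) := by
    simpa [hu, Algebra.algebraMap_eq_smul_one, Matrix.det_smul] using u.isUnit.map Matrix.detMonoidHom
  obtain ⟨c', rfl⟩ := (isUnit_pow_iff two_ne_zero).mp hdet
  exact ⟨c', Units.ext hu.symm⟩

theorem orderOf_mk_dvd_of_mul_zpow_mem {G : Type*} [Group G] {N : Subgroup G} [N.Normal]
    {a b : G} {k : ℤ} (h : a * b ^ k ∈ N) :
    orderOf (a : G ⧸ N) ∣ orderOf (b : G ⧸ N) := by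
  apply orderOf_dvd_of_mem_zpowers
  refine ⟨-k, ?_⟩
  have hone : (a : G ⧸ N) * (b : G ⧸ N) ^ k = 1 := by
    rwa [← QuotientGroup.mk_zpow, ← QuotientGroup.mk_mul, QuotientGroup.eq_one_iff]
  simpa [_root_.zpow_neg] using (eq_inv_of_mul_eq_one_left hone).symm

theorem stmt_19_general (p : ℕ)
    (t : ZMod p)
    (Du : (M2 p)ˣ) (hDu : (Du : M2 p) = !![0, -1; 1, t])
    (x : ℤ → ZMod p) (hrec : ∀ n : ℤ, x (n + 1) = t * x n - x (n - 1))
    (hzero : ∃ k : ℤ, x k = 0)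
    (X : M2 p) (hX : X = !![x 1 - t * x 0, -(x 0); x 0, x 1])
    (xu : (M2 p)ˣ) (hxu : (xu : M2 p) = X)
    (hmem : xu ∈ Subgroup.centralizer {Du}) :
    orderOf (QuotientGroup.mk (⟨xu, hmem⟩ : Subgroup.centralizer {Du}) :
        (Subgroup.centralizer {Du}) ⧸ ((scalarUnits p).subgroupOf (Subgroup.centralizer {Du})))
      ∣ orderOf (QuotientGroup.mk (⟨Du, mem_centralizer_self Du⟩ : Subgroup.centralizer {Du}) :
        (Subgroup.centralizer {Du}) ⧸ ((scalarUnits p).subgroupOf (Subgroup.centralizer {Du}))) := by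
  obtain ⟨k, hk⟩ := hzero
  have hpow : ∀ n : ℤ, ((xu * Du ^ n : (M2 p)ˣ) : M2 p) = seqMatrix t x n :=
    Units.val_mul_zpow_eq_of_mul_eq (by simp [hxu, hX, seqMatrix])
      (fun n => hDu ▸ seqMatrix_mul_companion hrec n)
  have hscalar : xu * Du ^ k ∈ scalarUnits p :=
    mem_scalarUnits_of_val_eq_algebraMap ((hpow k).trans (seqMatrix_of_eq_zero hk))
  apply orderOf_mk_dvd_of_mul_zpow_mem (k := k)
  simpa [Subgroup.mem_subgroupOf] using hscalar

theorem stmt_19 (p : ℕ) [Fact (Nat.Prime p)] (hodd : p ≠ 2)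
    (t : ZMod p) (ht : t ^ 2 - 4 ≠ 0)
    (Du : (M2 p)ˣ) (hDu : (Du : M2 p) = !![0, -1; 1, t])
    (x : ℤ → ZMod p) (hrec : ∀ n : ℤ, x (n + 1) = t * x n - x (n - 1))
    (hnz : ¬ ∀ n : ℤ, x n = 0) (hzero : ∃ k : ℤ, x k = 0)
    (X : M2 p) (hX : X = !![x 1 - t * x 0, -(x 0); x 0, x 1])
    (hdet : X.det ≠ 0)
    (xu : (M2 p)ˣ) (hxu : (xu : M2 p) = X)
    (hmem : xu ∈ Subgroup.centralizer {Du}) :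
    orderOf (QuotientGroup.mk (⟨xu, hmem⟩ : Subgroup.centralizer {Du}) :
        (Subgroup.centralizer {Du}) ⧸ ((scalarUnits p).subgroupOf (Subgroup.centralizer {Du})))
      ∣ orderOf (QuotientGroup.mk (⟨Du, mem_centralizer_self Du⟩ : Subgroup.centralizer {Du}) :
        (Subgroup.centralizer {Du}) ⧸ ((scalarUnits p).subgroupOf (Subgroup.centralizer {Du}))) :=
  stmt_19_general p t Du hDu x hrec hzero X hX xu hxu hmem
end
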